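/- arXiv:math/0506592 — 2 statements merged into one kernel-verified Lean document; each statement's English description precedes it below -/
import Mathlib

section
/- Let d ≥ 2 be an integer, let H = 3/(2d), and let T > 0. Then ∫_𝒯 μ(τ)² (λ(τ)ρ(τ))^{−d/2−1} dτ = ∞, where 𝒯 = {(s,t,s',t') : 0 < s < t < T, 0 < s' < t' < T}. -/
open MeasureTheory Real Set Filter Topology
open scoped ENNReal

/-- `λ(τ) = (t−s)^{2H}`, the variance of the increment `B_t − B_s`. -/
noncomputable def lamF (H s t : ℝ) : ℝ := (t - s)^(2*H)

/-- `μ(s,t,s',t') = (|s−t'|^{2H} + |s'−t|^{2H} − |t−t'|^{2H} − |s−s'|^{2H})/2`, the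
covariance of the increments `B_t − B_s` and `B_{t'} − B_{s'}` of a one-dimensional
fractional Brownian motion with Hurst parameter `H`. -/
noncomputable def muF (H s t s' t' : ℝ) : ℝ :=
  (|s - t'|^(2*H) + |s' - t|^(2*H) - |t - t'|^(2*H) - |s - s'|^(2*H)) / 2

/-- The region `𝒯 = {(s,t,s',t') : 0 < s < t < T, 0 < s' < t' < T}`. -/
def regionT (T : ℝ) : Set (ℝ × ℝ × ℝ × ℝ) :=
  {τ | 0 < τ.1 ∧ τ.1 < τ.2.1 ∧ τ.2.1 < T ∧
       0 < τ.2.2.1 ∧ τ.2.2.1 < τ.2.2.2 ∧ τ.2.2.2 < T}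

lemma key_bound {d : ℕ} (hd : 2 ≤ d) {H : ℝ} (hH : H = 3 / (2*(d:ℝ)))
    {ε b s t s' t' : ℝ} (hε : 0 < ε)
    (hs1 : b < s) (hs2 : s < b + ε/8)
    (ht1 : b + 7*ε/8 < t) (ht2 : t < b + ε)
    (hs'1 : b < s') (hs'2 : s' < b + ε/8)
    (ht'1 : b + 7*ε/8 < t') (ht'2 : t' < b + ε) :
    ((3/4:ℝ)^(2*H) - (1/8:ℝ)^(2*H))^2 / ε^3 ≤
      (muF H s t s' t')^2 * (lamF H s t * lamF H s' t') ^ (-(d:ℝ)/2 - 1) := by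
  have hd0 : (0:ℝ) < d := by exact_mod_cast Nat.lt_of_lt_of_le Nat.zero_lt_two hd
  have hHpos : 0 < H := by rw [hH]; positivity
  have he : 0 < 2*H := by linarith
  set c : ℝ := (3/4:ℝ)^(2*H) - (1/8:ℝ)^(2*H) with hc
  have hcpos : 0 < c := by
    have := Real.rpow_lt_rpow (by norm_num : (0:ℝ) ≤ 1/8) (by norm_num : (1/8:ℝ) < 3/4) he
    simp only [hc]; linarith
  -- distance bounds
  have h1 : 3*ε/4 ≤ |s - t'| := by
    have := le_abs_self (t' - s); rw [abs_sub_comm] at this; linarith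
  have h2 : 3*ε/4 ≤ |s' - t| := by
    have := le_abs_self (t - s'); rw [abs_sub_comm] at this; linarith
  have h3 : |t - t'| ≤ ε/8 := abs_le.mpr ⟨by linarith, by linarith⟩
  have h4 : |s - s'| ≤ ε/8 := abs_le.mpr ⟨by linarith, by linarith⟩
  have hq : (0:ℝ) ≤ 3*ε/4 := by linarith
  have A1 := Real.rpow_le_rpow hq h1 he.le
  have A2 := Real.rpow_le_rpow hq h2 he.le
  have A3 := Real.rpow_le_rpow (abs_nonneg _) h3 he.le
  have A4 := Real.rpow_le_rpow (abs_nonneg _) h4 he.le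
  -- mu lower bound
  have hmu : ε^(2*H) * c ≤ muF H s t s' t' := by
    have e34 : (3*ε/4 : ℝ) = ε * (3/4) := by ring
    have e18 : (ε/8 : ℝ) = ε * (1/8) := by ring
    rw [e34] at A1 A2
    rw [e18] at A3 A4
    rw [Real.mul_rpow hε.le (by norm_num)] at A1 A2 A3 A4
    rw [muF, hc]
    have hpow := Real.rpow_nonneg hε.le (2*H)
    nlinarith [A1, A2, A3, A4]
  have hmu0 : 0 ≤ ε^(2*H) * c := by positivity
  have hmusq : (ε^(2*H) * c)^2 ≤ (muF H s t s' t')^2 := pow_le_pow_left₀ hmu0 hmu 2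
  -- lam product bounds
  have hts : 0 < t - s := by linarith
  have hts' : 0 < t' - s' := by linarith
  have hl1 : lamF H s t ≤ ε^(2*H) := Real.rpow_le_rpow hts.le (by linarith) he.le
  have hl2 : lamF H s' t' ≤ ε^(2*H) := Real.rpow_le_rpow hts'.le (by linarith) he.le
  have hl1p : 0 < lamF H s t := Real.rpow_pos_of_pos hts _
  have hl2p : 0 < lamF H s' t' := Real.rpow_pos_of_pos hts' _
  have hprod : lamF H s t * lamF H s' t' ≤ ε^(2*H) * ε^(2*H) :=
    mul_le_mul hl1 hl2 hl2p.le (Real.rpow_nonneg hε.le _)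
  have hp : (-(d:ℝ)/2 - 1) ≤ 0 := by linarith
  have hBpow : (ε^(2*H) * ε^(2*H)) ^ (-(d:ℝ)/2 - 1) ≤
      (lamF H s t * lamF H s' t') ^ (-(d:ℝ)/2 - 1) :=
    Real.rpow_le_rpow_of_nonpos (by positivity) hprod hp
  have hcomb : (ε^(2*H) * c)^2 * (ε^(2*H) * ε^(2*H)) ^ (-(d:ℝ)/2 - 1) ≤
      (muF H s t s' t')^2 * (lamF H s t * lamF H s' t') ^ (-(d:ℝ)/2 - 1) :=
    mul_le_mul hmusq hBpow (Real.rpow_nonneg (by positivity) _) (sq_nonneg _)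
  refine le_trans (le_of_eq ?_) hcomb
  -- arithmetic: (ε^(2H) c)^2 (ε^(2H) ε^(2H))^p = c^2 ε^(4H + 4H p) = c^2 / ε^3
  have hdne : (d:ℝ) ≠ 0 := ne_of_gt hd0
  have hexp : (2*H+2*H) + (2*H+2*H)*(-(d:ℝ)/2 - 1) = -3 := by
    rw [hH]; field_simp; ring
  have e1 : ε^(2*H) * ε^(2*H) = ε^(2*H+2*H) := (Real.rpow_add hε _ _).symm
  have e2 : (ε^(2*H+2*H)) ^ (-(d:ℝ)/2 - 1) = ε ^ ((2*H+2*H)*(-(d:ℝ)/2 - 1)) :=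
    (Real.rpow_mul hε.le _ _).symm
  have e3 : ε ^ (-3 : ℝ) = (ε^3)⁻¹ := by
    rw [show (-3:ℝ) = -((3:ℕ):ℝ) by norm_num, Real.rpow_neg hε.le, Real.rpow_natCast]
  calc c^2 / ε^3 = c^2 * (ε^3)⁻¹ := by ring
    _ = c^2 * ε ^ (-3:ℝ) := by rw [e3]
    _ = c^2 * ε ^ ((2*H+2*H) + (2*H+2*H)*(-(d:ℝ)/2 - 1)) := by rw [hexp]
    _ = c^2 * (ε^(2*H+2*H) * ε ^ ((2*H+2*H)*(-(d:ℝ)/2 - 1))) := by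
        rw [Real.rpow_add hε]
    _ = (ε^(2*H) * c)^2 * (ε^(2*H) * ε^(2*H)) ^ (-(d:ℝ)/2 - 1) := by
        rw [e1, e2]; rw [← e1]; ring

/-- If `H = 3/(2d)`, then `∫_𝒯 μ(τ)² (λ(τ)ρ(τ))^{−d/2−1} dτ = ∞`. -/
theorem integral_mu_sq_eq_top {d : ℕ} (hd : 2 ≤ d) {H : ℝ} (hH : H = 3 / (2*(d:ℝ)))
    {T : ℝ} (hT : 0 < T) :
    ∫⁻ τ in regionT T, ENNReal.ofReal
        ((muF H τ.1 τ.2.1 τ.2.2.1 τ.2.2.2)^2 *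
          (lamF H τ.1 τ.2.1 * lamF H τ.2.2.1 τ.2.2.2) ^ (-(d:ℝ)/2 - 1)) = ⊤ := by
  have hd0 : (0:ℝ) < d := by exact_mod_cast Nat.lt_of_lt_of_le Nat.zero_lt_two hd
  have hHpos : 0 < H := by rw [hH]; positivity
  have he : 0 < 2*H := by linarith
  set F : ℝ × ℝ × ℝ × ℝ → ℝ≥0∞ := fun τ => ENNReal.ofReal
        ((muF H τ.1 τ.2.1 τ.2.2.1 τ.2.2.2)^2 *
          (lamF H τ.1 τ.2.1 * lamF H τ.2.2.1 τ.2.2.2) ^ (-(d:ℝ)/2 - 1)) with hF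
  set c : ℝ := (3/4:ℝ)^(2*H) - (1/8:ℝ)^(2*H) with hc
  have hcpos : 0 < c := by
    have := Real.rpow_lt_rpow (by norm_num : (0:ℝ) ≤ 1/8) (by norm_num : (1/8:ℝ) < 3/4) he
    simp only [hc]; linarith
  set ε : ℕ → ℝ := fun n => T / 2^(n+1) with hεdef
  have hεpos : ∀ n, 0 < ε n := fun n => by
    simp only [hεdef]; positivity
  set B : ℕ → ℕ → Set (ℝ×ℝ×ℝ×ℝ) := fun n k =>
    Ioo ((k:ℝ)*ε n) ((k:ℝ)*ε n + ε n/8) ×ˢ Ioo ((k:ℝ)*ε n + 7*ε n/8) ((k:ℝ)*ε n + ε n) ×ˢ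
    Ioo ((k:ℝ)*ε n) ((k:ℝ)*ε n + ε n/8) ×ˢ Ioo ((k:ℝ)*ε n + 7*ε n/8) ((k:ℝ)*ε n + ε n) with hB
  set A : ℕ → Set (ℝ×ℝ×ℝ×ℝ) := fun n => ⋃ k ∈ Finset.range (2^(n+1)), B n k with hA
  have hBmeas : ∀ n k, MeasurableSet (B n k) := fun n k =>
    measurableSet_Ioo.prod (measurableSet_Ioo.prod (measurableSet_Ioo.prod measurableSet_Ioo))
  have hAmeas : ∀ n, MeasurableSet (A n) := fun n =>
    (Finset.range _).measurableSet_biUnion (fun k _ => hBmeas n k)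
  -- membership unpacking
  have hmemB : ∀ n k (τ : ℝ×ℝ×ℝ×ℝ), τ ∈ B n k →
      ((k:ℝ)*ε n < τ.1 ∧ τ.1 < (k:ℝ)*ε n + ε n/8) ∧
      ((k:ℝ)*ε n + 7*ε n/8 < τ.2.1 ∧ τ.2.1 < (k:ℝ)*ε n + ε n) ∧
      ((k:ℝ)*ε n < τ.2.2.1 ∧ τ.2.2.1 < (k:ℝ)*ε n + ε n/8) ∧
      ((k:ℝ)*ε n + 7*ε n/8 < τ.2.2.2 ∧ τ.2.2.2 < (k:ℝ)*ε n + ε n) := by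
    intro n k τ hτ
    simp only [hB, Set.mem_prod, Set.mem_Ioo] at hτ
    exact hτ
  have hdiff : ∀ n (τ : ℝ×ℝ×ℝ×ℝ), τ ∈ A n →
      3*ε n/4 < τ.2.1 - τ.1 ∧ τ.2.1 - τ.1 < ε n := by
    intro n τ hτ
    simp only [hA, Set.mem_iUnion, Finset.mem_range] at hτ
    obtain ⟨k, -, hk⟩ := hτ
    obtain ⟨⟨h1,h2⟩,⟨h3,h4⟩,-⟩ := hmemB n k τ hk
    exact ⟨by linarith, by linarith⟩
  have hεmono : ∀ {n m : ℕ}, n < m → ε m ≤ ε n / 2 := by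
    intro n m hnm
    have h1 : ε n / 2 = T / 2^(n+2) := by
      simp only [hεdef]; rw [div_div, ← pow_succ]
    rw [h1]
    simp only [hεdef]
    apply div_le_div_of_nonneg_left hT.le (by positivity)
    exact pow_le_pow_right₀ one_le_two (by omega)
  have hApd : Pairwise (Function.onFun Disjoint A) := by
    have hlt : ∀ n m : ℕ, n < m → Disjoint (A n) (A m) := by
      intro n m hnm
      rw [Set.disjoint_left]
      intro τ hn hm
      obtain ⟨g1, g2⟩ := hdiff n τ hn
      obtain ⟨g3, g4⟩ := hdiff m τ hm
      have := hεmono hnm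
      have := hεpos n
      linarith
    intro n m hnm
    rcases hnm.lt_or_gt with h | h
    · exact hlt n m h
    · exact (hlt m n h).symm
  have hsub : ∀ n, A n ⊆ regionT T := by
    intro n τ hτ
    simp only [hA, Set.mem_iUnion, Finset.mem_range] at hτ
    obtain ⟨k, hkmem, hk⟩ := hτ
    obtain ⟨⟨h1,h2⟩,⟨h3,h4⟩,⟨h5,h6⟩,⟨h7,h8⟩⟩ := hmemB n k τ hk
    have hk0 : (0:ℝ) ≤ (k:ℝ)*ε n := mul_nonneg (Nat.cast_nonneg k) (hεpos n).le
    have hkT : ((k:ℝ)+1) * ε n ≤ T := by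
      have hcast : ((k:ℝ)+1) ≤ 2^(n+1) := by
        have : (k+1 : ℕ) ≤ 2^(n+1) := hkmem
        exact_mod_cast this
      have := mul_le_mul_of_nonneg_right hcast (hεpos n).le
      calc ((k:ℝ)+1) * ε n ≤ 2^(n+1) * ε n := this
        _ = T := by simp only [hεdef]; field_simp
    have hεn := hεpos n
    refine ⟨by linarith, by linarith, by nlinarith, by linarith, by linarith, by nlinarith⟩
  -- volume of boxes
  have hBvol : ∀ n k, volume (B n k) = ENNReal.ofReal ((ε n/8)^4) := by
    intro n k
    have hεn := hεpos n
    simp only [hB]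
    rw [Measure.volume_eq_prod, Measure.prod_prod, Measure.volume_eq_prod, Measure.prod_prod,
      Measure.volume_eq_prod, Measure.prod_prod]
    simp only [Real.volume_Ioo]
    rw [show (k:ℝ)*ε n + ε n/8 - (k:ℝ)*ε n = ε n/8 by ring,
        show (k:ℝ)*ε n + ε n - ((k:ℝ)*ε n + 7*ε n/8) = ε n/8 by ring]
    rw [← ENNReal.ofReal_mul (by positivity), ← ENNReal.ofReal_mul (by positivity),
        ← ENNReal.ofReal_mul (by positivity)]
    congr 1; ring
  have hAvol : ∀ n, volume (A n) = (2^(n+1) : ℕ) * ENNReal.ofReal ((ε n/8)^4) := by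
    intro n
    have hpd : (↑(Finset.range (2^(n+1))) : Set ℕ).PairwiseDisjoint (B n) := by
      have hlt : ∀ i j : ℕ, i < j → Disjoint (B n i) (B n j) := by
        intro i j hij
        rw [Set.disjoint_left]
        intro τ hi hj
        obtain ⟨⟨g1, g2⟩, -⟩ := hmemB n i τ hi
        obtain ⟨⟨g3, g4⟩, -⟩ := hmemB n j τ hj
        have hcast : ((i:ℝ)+1) ≤ (j:ℝ) := by exact_mod_cast hij
        have := mul_le_mul_of_nonneg_right hcast (hεpos n).le
        have hεn := hεpos n
        nlinarith
      intro i _ j _ hij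
      rcases hij.lt_or_gt with h | h
      · exact hlt i j h
      · exact (hlt j i h).symm
    simp only [hA]
    rw [measure_biUnion_finset hpd (fun k _ => hBmeas n k)]
    rw [Finset.sum_congr rfl (fun k _ => hBvol n k), Finset.sum_const, Finset.card_range,
      nsmul_eq_mul]
  -- per-scale bound
  have hAn : ∀ n, ENNReal.ofReal (c^2 * T / 4096) ≤ ∫⁻ τ in A n, F τ := by
    intro n
    have hεn := hεpos n
    have hstep : ∀ τ ∈ A n, ENNReal.ofReal (c^2 / (ε n)^3) ≤ F τ := by
      intro τ hτ
      simp only [hA, Set.mem_iUnion, Finset.mem_range] at hτ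
      obtain ⟨k, -, hk⟩ := hτ
      obtain ⟨⟨h1,h2⟩,⟨h3,h4⟩,⟨h5,h6⟩,⟨h7,h8⟩⟩ := hmemB n k τ hk
      exact ENNReal.ofReal_le_ofReal
        (key_bound hd hH (hεpos n) h1 h2 h3 h4 h5 h6 h7 h8)
    have hmono := setLIntegral_mono' (μ := volume) (hAmeas n) hstep
    rw [setLIntegral_const] at hmono
    refine le_trans (le_of_eq ?_) hmono
    rw [hAvol n]
    rw [show ((2^(n+1):ℕ) : ℝ≥0∞) = ENNReal.ofReal ((2:ℝ)^(n+1)) by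
      rw [← ENNReal.ofReal_natCast (2^(n+1))]; push_cast; ring_nf]
    rw [← ENNReal.ofReal_mul (by positivity), ← ENNReal.ofReal_mul (by positivity)]
    congr 1
    have hP : (0:ℝ) < 2^(n+1) := by positivity
    simp only [hεdef]
    field_simp
    ring
  -- conclusion
  have hκ : ENNReal.ofReal (c^2 * T / 4096) ≠ 0 :=
    (ENNReal.ofReal_pos.mpr (by positivity)).ne'
  have htop : (⊤:ℝ≥0∞) ≤ ∫⁻ τ in regionT T, F τ := by
    calc (⊤:ℝ≥0∞) = ∑' _ : ℕ, ENNReal.ofReal (c^2 * T / 4096) :=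
          (ENNReal.tsum_const_eq_top_of_ne_zero hκ).symm
      _ ≤ ∑' n, ∫⁻ τ in A n, F τ := ENNReal.tsum_le_tsum hAn
      _ = ∫⁻ τ in ⋃ n, A n, F τ := (lintegral_iUnion hAmeas hApd F).symm
      _ ≤ ∫⁻ τ in regionT T, F τ := lintegral_mono_set (Set.iUnion_subset hsub)
  exact top_le_iff.mp htop
end

section
/- Let d ≥ 2 be an integer, let H ∈ (0,1) satisfy 1/d < H < 3/(2d), and let T > 0. Then lim_{ε→0⁺} ε^{d/2 − 1/(2H)} ∫_0^T (T − s)(ε + s^{2H})^{−d/2} ds = T ∫_0^∞ (1 + z^{2H})^{−d/2} dz, and the integral on the right-hand side is finite. -/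
/-!
Substituting `s = ε^{1/(2H)} z` turns `(ε + s^{2H})^{-d/2}` into `ε^{-d/2} (1 + z^{2H})^{-d/2}`,
so the rescaled integral becomes `∫_0^∞ (T - ε^{1/(2H)} z)⁺ (1 + z^{2H})^{-d/2} dz`.
Its integrand is dominated by `T (1 + z^{2H})^{-d/2}`, which is integrable because it decays like
`z^{-dH}` and `dH > 1`; dominated convergence as `ε → 0⁺` gives the limit.
-/

open MeasureTheory Real Set Filter Topology

section

variable {a r T : ℝ}

theorem integrableOn_Ioi_one_add_rpow_rpow (hr : r ≤ 0) (har : a * r < -1) :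
    IntegrableOn (fun z : ℝ => (1 + z ^ a) ^ r) (Ioi 0) := by
  have hmeas : Measurable fun z : ℝ => (1 + z ^ a) ^ r := by fun_prop
  have h_le_one : IntegrableOn (fun z : ℝ => (1 + z ^ a) ^ r) (Ioc 0 1) := by
    refine (integrableOn_const (C := (1 : ℝ)) measure_Ioc_lt_top.ne).mono'
      hmeas.aestronglyMeasurable ((ae_restrict_iff' measurableSet_Ioc).mpr
        (.of_forall fun z hz => ?_))
    have hbase : 1 ≤ 1 + z ^ a := le_add_of_nonneg_right (rpow_nonneg hz.1.le a)
    rw [norm_of_nonneg (rpow_nonneg (by linarith) r)]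
    exact rpow_le_one_of_one_le_of_nonpos hbase hr
  have h_gt_one : IntegrableOn (fun z : ℝ => (1 + z ^ a) ^ r) (Ioi 1) := by
    refine (integrableOn_Ioi_rpow_of_lt har one_pos).mono' hmeas.aestronglyMeasurable
      ((ae_restrict_iff' measurableSet_Ioi).mpr (.of_forall fun z (hz : 1 < z) => ?_))
    have hz : 0 < z := one_pos.trans hz
    have hza : 0 < z ^ a := rpow_pos_of_pos hz a
    rw [norm_of_nonneg (rpow_nonneg (by linarith) r), rpow_mul hz.le]
    exact rpow_le_rpow_of_nonpos hza (le_add_of_nonneg_left zero_le_one) hr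
  rw [← Ioc_union_Ioi_eq_Ioi zero_le_one]
  exact h_le_one.union h_gt_one

theorem setIntegral_Ioc_sub_mul_eq_setIntegral_Ioi_max (g : ℝ → ℝ) :
    ∫ s in Ioc 0 T, (T - s) * g s = ∫ s in Ioi 0, max (T - s) 0 * g s := by
  rw [setIntegral_eq_of_subset_of_forall_sdiff_eq_zero measurableSet_Ioi
    (Ioc_subset_Ioi_self : Ioc 0 T ⊆ Ioi 0) fun s hs => by
      simp [(not_le.mp fun h => hs.2 ⟨hs.1, h⟩ : T < s).le]]
  exact setIntegral_congr_fun measurableSet_Ioc fun s hs => by simp [sub_nonneg.mpr hs.2]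

theorem rpow_add_mul_rpow_rpow {c z : ℝ} (hc : 0 < c) (hz : 0 ≤ z) :
    (c ^ a + (c * z) ^ a) ^ r = c ^ (a * r) * (1 + z ^ a) ^ r := by
  have hca : 0 ≤ c ^ a := rpow_nonneg hc.le a
  rw [mul_rpow hc.le hz, ← mul_one_add, mul_rpow hca (by positivity), rpow_mul hc.le]

theorem setIntegral_Ioc_sub_mul_rpow_add_rpow {c : ℝ} (hc : 0 < c) :
    ∫ s in Ioc 0 T, (T - s) * (c ^ a + s ^ a) ^ r
      = c ^ (a * r + 1) * ∫ z in Ioi 0, max (T - c * z) 0 * (1 + z ^ a) ^ r := by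
  have hscale := integral_comp_mul_left_Ioi' (E := ℝ)
    (fun s : ℝ => max (T - s) 0 * (c ^ a + s ^ a) ^ r) 0 hc
  rw [mul_zero] at hscale
  rw [setIntegral_Ioc_sub_mul_eq_setIntegral_Ioi_max, ← hscale, smul_eq_mul,
    rpow_add_one hc.ne', mul_comm (c ^ (a * r)) c, mul_assoc]
  congr 1
  rw [← MeasureTheory.integral_const_mul]
  refine setIntegral_congr_fun measurableSet_Ioi fun z (hz : 0 < z) => ?_
  rw [rpow_add_mul_rpow_rpow hc hz.le]
  ring

theorem rpow_mul_setIntegral_Ioc_sub_mul_rpow_add_rpow (ha : a ≠ 0) {ε : ℝ} (hε : 0 < ε) :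
    ε ^ (-r - 1 / a) * ∫ s in Ioc 0 T, (T - s) * (ε + s ^ a) ^ r
      = ∫ z in Ioi 0, max (T - ε ^ (1 / a) * z) 0 * (1 + z ^ a) ^ r := by
  have hε_eq : (ε ^ (1 / a)) ^ a = ε := by
    rw [← rpow_mul hε.le, one_div_mul_cancel ha, rpow_one]
  have h := setIntegral_Ioc_sub_mul_rpow_add_rpow (a := a) (T := T) (r := r)
    (rpow_pos_of_pos hε (1 / a))
  rw [hε_eq, ← rpow_mul hε.le] at h
  rw [h, ← mul_assoc, ← rpow_add hε]
  convert one_mul _ using 2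
  rw [show -r - 1 / a + 1 / a * (a * r + 1) = 0 by field_simp; ring, rpow_zero]

theorem tendsto_setIntegral_Ioi_max_sub_mul_mul {f : ℝ → ℝ} (hf : IntegrableOn f (Ioi 0))
    (hT : 0 ≤ T) :
    Tendsto (fun c => ∫ z in Ioi 0, max (T - c * z) 0 * f z) (𝓝[≥] 0)
      (𝓝 (T * ∫ z in Ioi 0, f z)) := by
  rw [← integral_const_mul]
  refine tendsto_integral_filter_of_dominated_convergence (fun z => T * ‖f z‖)
    (.of_forall fun c => ?_) ?_ (hf.norm.const_mul T) ?_
  · exact (Continuous.aestronglyMeasurable (by fun_prop)).mul hf.aestronglyMeasurable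
  · filter_upwards [self_mem_nhdsWithin] with c (hc : 0 ≤ c)
    refine (ae_restrict_iff' measurableSet_Ioi).mpr (.of_forall fun z (hz : 0 < z) => ?_)
    rw [norm_mul, norm_of_nonneg (le_max_right _ _)]
    gcongr
    exact max_le (by nlinarith) hT
  · refine .of_forall fun z => ?_
    have hcont : Continuous fun c : ℝ => max (T - c * z) 0 * f z := by fun_prop
    simpa [hT] using (hcont.tendsto 0).mono_left nhdsWithin_le_nhds

end

theorem expectation_asymptotics_general {d : ℕ} (hd : 2 ≤ d) {H : ℝ}
    (hH0 : 0 < H) (hHd1 : 1 / (d:ℝ) < H)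
    {T : ℝ} (hT : 0 < T) :
    Tendsto (fun ε : ℝ =>
        ε ^ ((d:ℝ)/2 - 1/(2*H)) *
          ∫ s in Ioc (0:ℝ) T, (T - s) * (ε + s^(2*H)) ^ (-(d:ℝ)/2))
      (𝓝[>] (0:ℝ))
      (𝓝 (T * ∫ z in Ioi (0:ℝ), (1 + z^(2*H)) ^ (-(d:ℝ)/2))) ∧
    IntegrableOn (fun z : ℝ => (1 + z^(2*H)) ^ (-(d:ℝ)/2)) (Ioi 0) := by
  have hd0 : (0:ℝ) < d := Nat.cast_pos.mpr (by omega)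
  have hdH : 1 < (d:ℝ) * H := by rwa [div_lt_iff₀ hd0, mul_comm] at hHd1
  have hf := integrableOn_Ioi_one_add_rpow_rpow (a := 2 * H) (r := -(d:ℝ)/2)
    (by linarith) (by linarith)
  refine ⟨?_, hf⟩
  have hscale : Tendsto (fun ε : ℝ => ε ^ (1 / (2 * H))) (𝓝[>] 0) (𝓝[≥] 0) := by
    refine tendsto_nhdsWithin_of_tendsto_nhds_of_eventually_within _ ?_
      (eventually_nhdsWithin_of_forall fun ε (hε : 0 < ε) => rpow_nonneg hε.le _)
    have hcont := continuousAt_rpow_const 0 (1 / (2 * H)) (Or.inr (by positivity))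
    rw [ContinuousAt, zero_rpow (by positivity)] at hcont
    exact hcont.mono_left nhdsWithin_le_nhds
  refine ((tendsto_setIntegral_Ioi_max_sub_mul_mul hf hT.le).comp hscale).congr' ?_
  filter_upwards [self_mem_nhdsWithin] with ε (hε : 0 < ε)
  rw [show (d:ℝ)/2 - 1/(2*H) = -(-(d:ℝ)/2) - 1/(2*H) by ring]
  exact (rpow_mul_setIntegral_Ioc_sub_mul_rpow_add_rpow (by positivity) hε).symm

/-- For `d ≥ 2` and `1/d < H < 3/(2d)`,
`lim_{ε→0⁺} ε^{d/2−1/(2H)} ∫_0^T (T−s)(ε+s^{2H})^{−d/2} ds = T ∫_0^∞ (1+z^{2H})^{−d/2} dz`,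
and the limit integral is finite (the integrand is integrable on `(0,∞)`). -/
theorem expectation_asymptotics {d : ℕ} (hd : 2 ≤ d) {H : ℝ}
    (hH0 : 0 < H) (hH1 : H < 1) (hHd1 : 1 / (d:ℝ) < H) (hHd2 : H < 3 / (2*(d:ℝ)))
    {T : ℝ} (hT : 0 < T) :
    Tendsto (fun ε : ℝ =>
        ε ^ ((d:ℝ)/2 - 1/(2*H)) *
          ∫ s in Ioc (0:ℝ) T, (T - s) * (ε + s^(2*H)) ^ (-(d:ℝ)/2))
      (𝓝[>] (0:ℝ))
      (𝓝 (T * ∫ z in Ioi (0:ℝ), (1 + z^(2*H)) ^ (-(d:ℝ)/2))) ∧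
    IntegrableOn (fun z : ℝ => (1 + z^(2*H)) ^ (-(d:ℝ)/2)) (Ioi 0) :=
  expectation_asymptotics_general hd hH0 hHd1 hT
end
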